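/- The separation theorem for designs: for designs phi1, phi2 on the same base, phi1 ⊑ phi2 if and only if every counter-design orthogonal to phi1 is orthogonal to phi2 (phi1-perp ⊆ phi2-perp). -/

import Mathlib

/-! Designs of ludics, as (possibly infinitely branching) trees of alternating
positive actions `(+, ξ, I)` and negative actions `(-, ζ, J)`, with leaves
`Ω` (the partial design) and the daimon `✠`. Addresses (loci) are lists of
natural numbers (biases). -/

mutual
  inductive PosDesign : Type
    | omega : PosDesign
    | daimon : PosDesign
    | pos : List ℕ → Finset ℕ → (ℕ → NegDesign) → PosDesign
  inductive NegDesign : Type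
    | neg : (Finset ℕ → PosDesign) → NegDesign
end

def NegDesign.app : NegDesign → Finset ℕ → PosDesign
  | .neg f, J => f J

/-! The order `⊑` on designs, generated by `Ω ⊑ φ`, `φ ⊑ ✠`, congruence,
reflexivity and transitivity.  The two boolean parameters state whether the
axiom `Ω ⊑ φ` (resp. `φ ⊑ ✠`) is allowed: `LeP true true` is the observational
order `⊑`, `LeP false true` is `≤L`, and `LeP true false` is `≤R` (the stable
order). -/

mutual
  inductive LeP (o d : Bool) : PosDesign → PosDesign → Prop
    | omega (φ : PosDesign) (h : o = true) : LeP o d .omega φ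
    | daimon (φ : PosDesign) (h : d = true) : LeP o d φ .daimon
    | refl (φ : PosDesign) : LeP o d φ φ
    | trans {φ₁ φ₂ φ₃ : PosDesign} :
        LeP o d φ₁ φ₂ → LeP o d φ₂ φ₃ → LeP o d φ₁ φ₃
    | pos (ξ : List ℕ) (I : Finset ℕ) (k k' : ℕ → NegDesign)
        (h : ∀ i ∈ I, LeN o d (k i) (k' i)) : LeP o d (.pos ξ I k) (.pos ξ I k')
  inductive LeN (o d : Bool) : NegDesign → NegDesign → Prop
    | neg (f f' : Finset ℕ → PosDesign)
        (h : ∀ J, LeP o d (f J) (f' J)) : LeN o d (.neg f) (.neg f')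
end

/-! Normalization (the affine abstract machine) and orthogonality. -/

/-- The environment update in rule (R): the cut design at address `ξ` is
consumed, and its immediate subdesigns `k i` (for `i ∈ I`) are installed at the
addresses `ξ ⋆ i`. -/
def stepEnv (Ψ : List ℕ → Option NegDesign) (ξ : List ℕ) (I : Finset ℕ)
    (k : ℕ → NegDesign) : List ℕ → Option NegDesign :=
  fun ζ =>
    if ζ ≠ [] ∧ ζ.dropLast = ξ ∧ ζ.getLast! ∈ I then some (k ζ.getLast!)
    else if ζ = ξ then none else Ψ ζ

/-- `Conv φ Ψ` : the normalization of the net `⟨φ | Ψ⟩` converges, i.e. the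
weak reduction machine started on `φ` with environment `Ψ` reaches `✠`. -/
inductive Conv : PosDesign → (List ℕ → Option NegDesign) → Prop
  | dai (Ψ : List ℕ → Option NegDesign) : Conv .daimon Ψ
  | step (ξ : List ℕ) (I : Finset ℕ) (k : ℕ → NegDesign)
      (f : Finset ℕ → PosDesign) (Ψ : List ℕ → Option NegDesign)
      (h : Ψ ξ = some (.neg f)) :
      Conv (f I) (stepEnv Ψ ξ I k) → Conv (.pos ξ I k) Ψ

/-- Orthogonality of a positive design on the base `⊢ ε` and a negative design
on the base `ε ⊢`: normalization of the cut between them converges to `✠`. -/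
def orth (φ : PosDesign) (ψ : NegDesign) : Prop :=
  Conv φ (fun ζ => if ζ = [] then some ψ else none)

/-! Typing (well-formedness) of designs on a given base. -/

mutual
  /-- `WFP φ Λ` : `φ` is a design on the positive base `⊢ Λ`. -/
  inductive WFP : PosDesign → Finset (List ℕ) → Prop
    | omega (Λ : Finset (List ℕ)) : WFP .omega Λ
    | dai (Λ : Finset (List ℕ)) : WFP .daimon Λ
    | pos (ξ : List ℕ) (I : Finset ℕ) (k : ℕ → NegDesign)
        (Λ : Finset (List ℕ)) (Λi : ℕ → Finset (List ℕ))
        (hξ : ξ ∈ Λ)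
        (hsub : ∀ i ∈ I, Λi i ⊆ Λ.erase ξ)
        (hdisj : ∀ i ∈ I, ∀ j ∈ I, i ≠ j → Disjoint (Λi i) (Λi j))
        (hk : ∀ i ∈ I, WFN (k i) (ξ ++ [i]) (Λi i)) :
        WFP (.pos ξ I k) Λ
  /-- `WFN ψ ξ Λ` : `ψ` is a design on the negative base `ξ ⊢ Λ`. -/
  inductive WFN : NegDesign → List ℕ → Finset (List ℕ) → Prop
    | neg (f : Finset ℕ → PosDesign) (ξ : List ℕ) (Λ : Finset (List ℕ))
        (h : ∀ J : Finset ℕ, WFP (f J) (J.image (fun j => ξ ++ [j]) ∪ Λ)) :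
        WFN (.neg f) ξ Λ
end

/-! `⊑` coincides with its structural presentation (`Ω` below everything, everything below
`✠`, congruence), which is already reflexive and transitive, and normalization is monotone
for it: this is the easy direction. Conversely, if `φ₁ ⋢ φ₂`, a counter-design follows `φ₁`
down to a place where the two trees differ, answering each action `(+, ξ, I)` of `φ₁` by an
action `(+, ξ ⋆ i, J)` that leads into a differing subdesign. At the place of difference it
accepts the action of `φ₁` with `✠`, while `φ₂` is `Ω` or plays an action answered by `Ω`.
Since the recursion enters subdesigns on larger bases, counter-designs are built for all
addresses of an antichain base at once. -/

mutual
  inductive StructLeP : PosDesign → PosDesign → Prop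
    | omega (φ : PosDesign) : StructLeP .omega φ
    | daimon (φ : PosDesign) : StructLeP φ .daimon
    | pos (ξ : List ℕ) (I : Finset ℕ) (k k' : ℕ → NegDesign)
        (h : ∀ i ∈ I, StructLeN (k i) (k' i)) : StructLeP (.pos ξ I k) (.pos ξ I k')
  inductive StructLeN : NegDesign → NegDesign → Prop
    | neg (f f' : Finset ℕ → PosDesign)
        (h : ∀ J, StructLeP (f J) (f' J)) : StructLeN (.neg f) (.neg f')
end

theorem structLeN_iff {ψ ψ' : NegDesign} :
    StructLeN ψ ψ' ↔ ∀ J, StructLeP (ψ.app J) (ψ'.app J) := by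
  cases ψ; cases ψ'
  exact ⟨fun ⟨_, _, h⟩ => h, StructLeN.neg _ _⟩

theorem StructLeP.eq_daimon_of_daimon_le {φ : PosDesign} (h : StructLeP .daimon φ) :
    φ = .daimon := by
  cases h; rfl

theorem StructLeP.pos_le_inv {ξ : List ℕ} {I : Finset ℕ} {k : ℕ → NegDesign} {φ : PosDesign}
    (h : StructLeP (.pos ξ I k) φ) :
    φ = .daimon ∨ ∃ k', φ = .pos ξ I k' ∧ ∀ i ∈ I, StructLeN (k i) (k' i) := by
  cases h with
  | daimon => exact .inl rfl
  | pos _ _ _ k' h => exact .inr ⟨k', rfl, h⟩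

mutual
theorem StructLeP.refl : ∀ φ, StructLeP φ φ
  | .omega => .omega _
  | .daimon => .daimon _
  | .pos ξ I k => .pos ξ I k k fun i _ => StructLeN.refl (k i)
theorem StructLeN.refl : ∀ ψ, StructLeN ψ ψ
  | .neg f => .neg f f fun J => StructLeP.refl (f J)
end

mutual
theorem StructLeP.trans : ∀ {φ₁ φ₂ φ₃ : PosDesign},
    StructLeP φ₁ φ₂ → StructLeP φ₂ φ₃ → StructLeP φ₁ φ₃
  | _, _, _, .omega _, _ => .omega _
  | _, _, _, .daimon _, h => h.eq_daimon_of_daimon_le ▸ .daimon _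
  | _, _, _, .pos ξ I k k' hk, h => by
    rcases h.pos_le_inv with rfl | ⟨k'', rfl, hk'⟩
    · exact .daimon _
    · exact .pos ξ I k k'' fun i hi => StructLeN.trans (hk i hi) (hk' i hi)
theorem StructLeN.trans : ∀ {ψ₁ ψ₂ ψ₃ : NegDesign},
    StructLeN ψ₁ ψ₂ → StructLeN ψ₂ ψ₃ → StructLeN ψ₁ ψ₃
  | _, _, .neg f₃, .neg f f₂ h, h' =>
    .neg f f₃ fun J => StructLeP.trans (h J) (structLeN_iff.mp h' J)
end

theorem leP_iff_structLeP {φ₁ φ₂ : PosDesign} : LeP true true φ₁ φ₂ ↔ StructLeP φ₁ φ₂ := by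
  refine ⟨fun h => ?_, fun h => ?_⟩
  · exact LeP.rec (motive_1 := fun a b _ => StructLeP a b)
      (motive_2 := fun a b _ => StructLeN a b)
      (fun φ _ => .omega φ) (fun φ _ => .daimon φ) StructLeP.refl
      (fun _ _ => StructLeP.trans) (fun ξ I k k' _ => .pos ξ I k k')
      (fun f f' _ => .neg f f') h
  · exact StructLeP.rec (motive_1 := fun a b _ => LeP true true a b)
      (motive_2 := fun a b _ => LeN true true a b)
      (fun φ => .omega φ rfl) (fun φ => .daimon φ rfl)
      (fun ξ I k k' _ => .pos ξ I k k') (fun f f' _ => .neg f f') h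

theorem not_conv_omega (Ψ : List ℕ → Option NegDesign) : ¬ Conv .omega Ψ := nofun

theorem conv_pos_iff {Ψ : List ℕ → Option NegDesign} {ξ : List ℕ} {ψ : NegDesign}
    (hψ : Ψ ξ = some ψ) (I : Finset ℕ) (k : ℕ → NegDesign) :
    Conv (.pos ξ I k) Ψ ↔ Conv (ψ.app I) (stepEnv Ψ ξ I k) := by
  constructor
  · rintro (_ | ⟨_, _, _, f, _, hf, hc⟩)
    obtain rfl : ψ = .neg f := Option.some_injective _ (hψ.symm.trans hf)
    exact hc
  · cases ψ with
    | neg f => exact Conv.step ξ I k f Ψ hψ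

theorem stepEnv_of_not_prefix {ξ ζ : List ℕ} (h : ¬ ξ <+: ζ)
    (Ψ : List ℕ → Option NegDesign) (I : Finset ℕ) (k : ℕ → NegDesign) :
    stepEnv Ψ ξ I k ζ = Ψ ζ := by
  have hne : ζ ≠ ξ := fun he => h (he ▸ List.prefix_refl ζ)
  have hdrop : ζ.dropLast ≠ ξ := fun he => h (he ▸ List.dropLast_prefix ζ)
  simp [stepEnv, hne, hdrop]

theorem stepEnv_append_singleton (Ψ : List ℕ → Option NegDesign) (ξ : List ℕ)
    {I : Finset ℕ} (k : ℕ → NegDesign) {i : ℕ} (hi : i ∈ I) :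
    stepEnv Ψ ξ I k (ξ ++ [i]) = some (k i) := by
  simp [stepEnv, hi]

theorem Conv.mono {φ₁ : PosDesign} {Ψ₁ : List ℕ → Option NegDesign} (h : Conv φ₁ Ψ₁) :
    ∀ {φ₂ Ψ₂}, StructLeP φ₁ φ₂ → (∀ ζ, Option.Rel StructLeN (Ψ₁ ζ) (Ψ₂ ζ)) → Conv φ₂ Ψ₂ := by
  induction h with
  | dai Ψ =>
    intro φ₂ Ψ₂ hle _
    exact hle.eq_daimon_of_daimon_le ▸ .dai _
  | step ξ I k f Ψ hΨ _ ih =>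
    intro φ₂ Ψ₂ hle hΨΨ₂
    rcases hle.pos_le_inv with rfl | ⟨k', rfl, hk⟩
    · exact .dai _
    have hξ := hΨΨ₂ ξ
    rw [hΨ] at hξ
    obtain ⟨ψ', hψ', hfψ'⟩ : ∃ ψ', Ψ₂ ξ = some ψ' ∧ StructLeN (.neg f) ψ' := by
      cases hψ' : Ψ₂ ξ <;> simp_all
    refine (conv_pos_iff hψ' I k').mpr (ih (structLeN_iff.mp hfψ' I) fun ζ => ?_)
    unfold stepEnv
    split_ifs with h₁
    · exact .some (hk _ h₁.2.2)
    · exact .none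
    · exact hΨΨ₂ ζ

theorem WFP.mono {φ : PosDesign} {Λ Λ' : Finset (List ℕ)} (h : WFP φ Λ) (hs : Λ ⊆ Λ') :
    WFP φ Λ' := by
  cases h with
  | omega => exact .omega _
  | dai => exact .dai _
  | pos ξ I k _ Λi hξ hsub hdisj hk =>
    exact .pos ξ I k Λ' Λi (hs hξ)
      (fun i hi => (hsub i hi).trans (Finset.erase_subset_erase _ hs)) hdisj hk

theorem WFN.app {ψ : NegDesign} {ξ : List ℕ} {Λ : Finset (List ℕ)} (h : WFN ψ ξ Λ)
    (J : Finset ℕ) : WFP (ψ.app J) (J.image (fun j => ξ ++ [j]) ∪ Λ) := by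
  cases h with
  | neg f _ _ h => exact h J

theorem WFP.mem_of_pos {ξ : List ℕ} {I : Finset ℕ} {k : ℕ → NegDesign} {Λ : Finset (List ℕ)}
    (h : WFP (.pos ξ I k) Λ) : ξ ∈ Λ := by
  cases h; assumption

/-- The base of the subdesign `(k i).app J` of `.pos ξ I k` on `⊢ Λ`, reached once the
counter-design has answered `(+, ξ ⋆ i, J)`. -/
def residualBase (Λ : Finset (List ℕ)) (ξ : List ℕ) (i : ℕ) (J : Finset ℕ) :
    Finset (List ℕ) :=
  J.image (fun j => ξ ++ [i] ++ [j]) ∪ Λ.erase ξ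

theorem WFP.app_residualBase {ξ : List ℕ} {I : Finset ℕ} {k : ℕ → NegDesign}
    {Λ : Finset (List ℕ)} (h : WFP (.pos ξ I k) Λ) {i : ℕ} (hi : i ∈ I) (J : Finset ℕ) :
    WFP ((k i).app J) (residualBase Λ ξ i J) := by
  cases h with
  | pos _ _ _ _ Λi _ hsub _ hk =>
    exact ((hk i hi).app J).mono (Finset.union_subset_union subset_rfl (hsub i hi))

theorem IsAntichain.residualBase {Λ : Finset (List ℕ)}
    (hΛ : IsAntichain (· <+: ·) (Λ : Set (List ℕ))) {ξ : List ℕ} (hξ : ξ ∈ Λ)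
    (i : ℕ) (J : Finset ℕ) :
    IsAntichain (· <+: ·) (residualBase Λ ξ i J : Set (List ℕ)) := by
  have hξσ (j : ℕ) : ξ <+: ξ ++ [i] ++ [j] :=
    (List.prefix_append _ _).trans (List.prefix_append _ _)
  intro a ha b hb hab hpre
  simp only [_root_.residualBase, Finset.coe_union, Finset.coe_image, Finset.coe_erase,
    Set.mem_union, Set.mem_image, Finset.mem_coe, Set.mem_sdiff, Set.mem_singleton_iff] at ha hb
  rcases ha with ⟨j, -, rfl⟩ | ⟨haΛ, haξ⟩ <;> rcases hb with ⟨j', -, rfl⟩ | ⟨hbΛ, hbξ⟩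
  · exact hab (hpre.eq_of_length (by simp))
  · exact hΛ hξ hbΛ (Ne.symm hbξ) ((hξσ j).trans hpre)
  · rcases List.prefix_or_prefix_of_prefix hpre (hξσ j') with h | h
    · exact hΛ haΛ hξ haξ h
    · exact hΛ hξ haΛ (Ne.symm haξ) h
  · exact hΛ haΛ hbΛ hab hpre

/-- Environments are constrained only on `Λ`: elsewhere a reduction installs the subdesigns
of the design being tested. -/
structure IsSeparator (Θ : List ℕ → NegDesign) (Λ : Finset (List ℕ)) (φ₁ φ₂ : PosDesign) :
    Prop where
  wfn : ∀ ζ, WFN (Θ ζ) ζ ∅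
  conv_left : ∀ Ψ, Set.EqOn Ψ (some ∘ Θ) Λ → Conv φ₁ Ψ
  not_conv_right : ∀ Ψ, Set.EqOn Ψ (some ∘ Θ) Λ → ¬ Conv φ₂ Ψ

def leafCounter (p : List ℕ → Finset ℕ → Bool) (ζ : List ℕ) : NegDesign :=
  .neg fun K => if p ζ K then .daimon else .omega

theorem wfn_leafCounter (p : List ℕ → Finset ℕ → Bool) (ζ : List ℕ) (Λ : Finset (List ℕ)) :
    WFN (leafCounter p ζ) ζ Λ :=
  .neg _ _ _ fun K => by
    by_cases h : p ζ K <;> simp only [h] <;> constructor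

theorem conv_pos_leafCounter_iff {Ψ : List ℕ → Option NegDesign}
    {p : List ℕ → Finset ℕ → Bool} {ξ : List ℕ} (hΨ : Ψ ξ = some (leafCounter p ξ))
    (I : Finset ℕ) (k : ℕ → NegDesign) : Conv (.pos ξ I k) Ψ ↔ p ξ I := by
  rw [conv_pos_iff hΨ]
  by_cases h : p ξ I
  · simpa [leafCounter, NegDesign.app, h] using Conv.dai _
  · simpa [leafCounter, NegDesign.app, h] using not_conv_omega _

theorem not_conv_of_eqOn_leafCounter {φ : PosDesign} {Λ : Finset (List ℕ)}
    {Ψ : List ℕ → Option NegDesign} {p : List ℕ → Finset ℕ → Bool} (hφ : WFP φ Λ)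
    (hΨ : Set.EqOn Ψ (some ∘ leafCounter p) Λ) (hd : φ ≠ .daimon)
    (hp : ∀ ξ I k, φ = .pos ξ I k → p ξ I = false) : ¬ Conv φ Ψ := by
  cases hφ with
  | omega => exact not_conv_omega Ψ
  | dai => exact absurd rfl hd
  | pos ξ I k _ _ hξ =>
    rw [conv_pos_leafCounter_iff (hΨ hξ)]
    simp [hp ξ I k rfl]

theorem isSeparator_daimon {φ : PosDesign} {Λ : Finset (List ℕ)} (h : WFP φ Λ)
    (hd : φ ≠ .daimon) : IsSeparator (leafCounter fun _ _ => false) Λ .daimon φ :=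
  ⟨fun ζ => wfn_leafCounter _ ζ ∅, fun _ _ => .dai _,
    fun _ hΨ => not_conv_of_eqOn_leafCounter h hΨ hd fun _ _ _ _ => rfl⟩

theorem isSeparator_pos_of_head_ne {ξ : List ℕ} {I : Finset ℕ} {k : ℕ → NegDesign}
    {φ : PosDesign} {Λ : Finset (List ℕ)} (hξ : ξ ∈ Λ) (h : WFP φ Λ) (hd : φ ≠ .daimon)
    (hhead : ∀ k', φ ≠ .pos ξ I k') :
    IsSeparator (leafCounter fun ζ K => ζ = ξ ∧ K = I) Λ (.pos ξ I k) φ := by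
  refine ⟨fun ζ => wfn_leafCounter _ ζ ∅, fun Ψ hΨ => ?_, fun Ψ hΨ => ?_⟩
  · simp [conv_pos_leafCounter_iff (hΨ hξ)]
  · refine not_conv_of_eqOn_leafCounter h hΨ hd ?_
    rintro ξ' I' k' rfl
    simp only [decide_eq_false_iff_not, not_and]
    rintro rfl rfl
    exact hhead k' rfl

theorem eqOn_stepEnv_stepEnv {Λ : Finset (List ℕ)}
    (hΛ : IsAntichain (· <+: ·) (Λ : Set (List ℕ))) {ξ : List ℕ} (hξ : ξ ∈ Λ)
    {Ψ : List ℕ → Option NegDesign} {Θ : List ℕ → NegDesign}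
    (hΨ : Set.EqOn Ψ (some ∘ Θ) (Λ.erase ξ)) (I : Finset ℕ) (k : ℕ → NegDesign) (i : ℕ)
    (J : Finset ℕ) :
    Set.EqOn (stepEnv (stepEnv Ψ ξ I k) (ξ ++ [i]) J fun j => Θ (ξ ++ [i] ++ [j]))
      (some ∘ Θ) (residualBase Λ ξ i J) := by
  intro ζ hζ
  simp only [residualBase, Finset.coe_union, Finset.coe_image, Set.mem_union,
    Set.mem_image, Finset.mem_coe] at hζ
  rcases hζ with ⟨j, hj, rfl⟩ | hζ
  · exact stepEnv_append_singleton _ _ _ hj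
  · obtain ⟨hζξ, hζΛ⟩ := Finset.mem_erase.mp hζ
    have hξζ : ¬ ξ <+: ζ := hΛ hξ hζΛ (Ne.symm hζξ)
    have hσζ : ¬ ξ ++ [i] <+: ζ := fun h => hξζ ((List.prefix_append _ _).trans h)
    rw [stepEnv_of_not_prefix hσζ, stepEnv_of_not_prefix hξζ, hΨ hζ]

/-- The counter-design answers `(+, ξ, I)` by `(+, ξ ⋆ i, J)` and then behaves like `Θ'`,
so both designs are driven into their subdesigns `(k i).app J` and `(k' i).app J`. -/
theorem isSeparator_pos_pos {Λ : Finset (List ℕ)}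
    (hΛ : IsAntichain (· <+: ·) (Λ : Set (List ℕ))) {ξ : List ℕ} (hξ : ξ ∈ Λ)
    {I : Finset ℕ} {k k' : ℕ → NegDesign} {i : ℕ} (hi : i ∈ I) {J : Finset ℕ}
    {Θ' : List ℕ → NegDesign}
    (hΘ' : IsSeparator Θ' (residualBase Λ ξ i J) ((k i).app J) ((k' i).app J)) :
    ∃ Θ, IsSeparator Θ Λ (.pos ξ I k) (.pos ξ I k') := by
  set m : ℕ → NegDesign := fun j => Θ' (ξ ++ [i] ++ [j])
  set F : Finset ℕ → PosDesign := fun K => if K = I then .pos (ξ ++ [i]) J m else .daimon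
  set Θ := Function.update Θ' ξ (.neg F)
  have hFI : (NegDesign.neg F).app I = .pos (ξ ++ [i]) J m := if_pos rfl
  have hrun (Ψ : List ℕ → Option NegDesign) (hΨ : Set.EqOn Ψ (some ∘ Θ) Λ)
      (k₀ : ℕ → NegDesign) :
      Conv (.pos ξ I k₀) Ψ ↔ Conv ((k₀ i).app J)
        (stepEnv (stepEnv Ψ ξ I k₀) (ξ ++ [i]) J m) := by
    have hΨξ : Ψ ξ = some (.neg F) := by simpa [Θ] using hΨ hξ
    rw [conv_pos_iff hΨξ, hFI, conv_pos_iff (stepEnv_append_singleton _ _ _ hi)]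
  have hagree (Ψ : List ℕ → Option NegDesign) (hΨ : Set.EqOn Ψ (some ∘ Θ) Λ)
      (k₀ : ℕ → NegDesign) :
      Set.EqOn (stepEnv (stepEnv Ψ ξ I k₀) (ξ ++ [i]) J m) (some ∘ Θ')
        (residualBase Λ ξ i J) :=
    eqOn_stepEnv_stepEnv hΛ hξ (fun ζ hζ => by
      rw [hΨ (Finset.mem_of_mem_erase hζ)]
      simp [Θ, Function.update_of_ne (Finset.ne_of_mem_erase hζ)]) I k₀ i J
  refine ⟨Θ, ⟨fun ζ => ?_, fun Ψ hΨ => ?_, fun Ψ hΨ => ?_⟩⟩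
  · rcases eq_or_ne ζ ξ with rfl | hζ
    · simp only [Θ, Function.update_self]
      refine .neg _ _ _ fun K => ?_
      by_cases hK : K = I
      · simp only [F, if_pos hK]
        exact .pos _ J m _ (fun _ => ∅)
          (Finset.mem_union_left _ (Finset.mem_image_of_mem _ (hK ▸ hi)))
          (fun _ _ => Finset.empty_subset _) (fun _ _ _ _ _ => Finset.disjoint_empty_left _)
          (fun j _ => hΘ'.wfn _)
      · simp only [F, if_neg hK]
        exact .dai _
    · simp only [Θ, Function.update_of_ne hζ]
      exact hΘ'.wfn ζ
  · exact (hrun Ψ hΨ k).mpr (hΘ'.conv_left _ (hagree Ψ hΨ k))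
  · exact fun hc => hΘ'.not_conv_right _ (hagree Ψ hΨ k') ((hrun Ψ hΨ k').mp hc)

mutual
theorem exists_isSeparator : ∀ (φ₁ φ₂ : PosDesign) {Λ : Finset (List ℕ)},
    IsAntichain (· <+: ·) (Λ : Set (List ℕ)) → WFP φ₁ Λ → WFP φ₂ Λ →
    ¬ StructLeP φ₁ φ₂ → ∃ Θ, IsSeparator Θ Λ φ₁ φ₂
  | .omega, φ₂, _, _, _, _, hle => absurd (.omega φ₂) hle
  | .daimon, _, _, _, _, h₂, hle =>
    ⟨_, isSeparator_daimon h₂ fun hd => hle (by rw [hd]; exact .daimon _)⟩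
  | .pos _ _ _, .daimon, _, _, _, _, hle => absurd (.daimon _) hle
  | .pos _ _ _, .omega, _, _, h₁, h₂, _ =>
    ⟨_, isSeparator_pos_of_head_ne h₁.mem_of_pos h₂ nofun nofun⟩
  | .pos ξ I k, .pos ξ' I' k', _, hΛ, h₁, h₂, hle => by
    by_cases hhead : ξ = ξ' ∧ I = I'
    · obtain ⟨rfl, rfl⟩ := hhead
      obtain ⟨i, hi, hik⟩ : ∃ i ∈ I, ¬ StructLeN (k i) (k' i) := by
        by_contra! h
        exact hle (.pos _ _ _ _ h)
      obtain ⟨J, hJ⟩ : ∃ J, ¬ StructLeP ((k i).app J) ((k' i).app J) := by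
        simpa [structLeN_iff] using hik
      obtain ⟨Θ', hΘ'⟩ := exists_isSeparator_app (k i) J ((k' i).app J)
        (hΛ.residualBase h₁.mem_of_pos i J) (h₁.app_residualBase hi J)
        (h₂.app_residualBase hi J) hJ
      exact isSeparator_pos_pos hΛ h₁.mem_of_pos hi hΘ'
    · refine ⟨_, isSeparator_pos_of_head_ne h₁.mem_of_pos h₂ nofun ?_⟩
      rintro k'' ⟨⟩
      exact hhead ⟨rfl, rfl⟩
theorem exists_isSeparator_app : ∀ (ψ : NegDesign) (J : Finset ℕ) (φ₂ : PosDesign)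
    {Λ : Finset (List ℕ)}, IsAntichain (· <+: ·) (Λ : Set (List ℕ)) → WFP (ψ.app J) Λ →
    WFP φ₂ Λ → ¬ StructLeP (ψ.app J) φ₂ → ∃ Θ, IsSeparator Θ Λ (ψ.app J) φ₂
  | .neg f, J, φ₂, _ => exists_isSeparator (f J) φ₂
end

/-- the separation theorem. For designs `φ₁`, `φ₂` on the same
base `⊢ ε` (here `ε = []`), `φ₁ ⊑ φ₂` if and only if every counter-design
orthogonal to `φ₁` is orthogonal to `φ₂`. -/
theorem separation (φ₁ φ₂ : PosDesign)
    (h₁ : WFP φ₁ {([] : List ℕ)}) (h₂ : WFP φ₂ {([] : List ℕ)}) :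
    LeP true true φ₁ φ₂ ↔
      ∀ ψ : NegDesign, WFN ψ [] ∅ → orth φ₁ ψ → orth φ₂ ψ := by
  rw [leP_iff_structLeP]
  refine ⟨fun hle ψ _ hψ => hψ.mono hle fun ζ => ?_, fun horth => ?_⟩
  · split_ifs
    · exact .some (StructLeN.refl ψ)
    · exact .none
  · by_contra hle
    obtain ⟨Θ, hΘ⟩ := exists_isSeparator φ₁ φ₂ (by simp) h₁ h₂ hle
    have hΨ : Set.EqOn (fun ζ => if ζ = [] then some (Θ []) else none) (some ∘ Θ)
        ({([] : List ℕ)} : Finset (List ℕ)) := by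
      intro ζ hζ
      simp_all
    exact hΘ.not_conv_right _ hΨ (horth _ (hΘ.wfn []) (hΘ.conv_left _ hΨ))
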